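/- arXiv:1908.08087 — 4 statements merged into one kernel-verified Lean document; each statement's English description precedes it below -/
import Mathlib

section
/- For every q > 0 there exists a constant C ≥ 1, depending only on q, such that for all ε ∈ (0,1] and all t ∈ 𝔻 the Jacobian determinant J_{ε,q}(t) of F_{ε,q}, viewed as a smooth map ℝ² → ℝ², satisfies C^{-1} (ε² + |t|²)^q ≤ J_{ε,q}(t) ≤ C (ε² + |t|²)^q. -/
open Metric Set

/-- The change-of-variables map `F_{ε,q}(t) = ((ε² + |t|²)/(1 + ε²))^{q/2} · t` from (2.10). -/
noncomputable def Feq (ε q : ℝ) (t : ℂ) : ℂ :=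
  (((ε ^ 2 + ‖t‖ ^ 2) / (1 + ε ^ 2)) ^ (q / 2) : ℝ) • t

lemma jac_eq (ε q : ℝ) (hε : 0 < ε) (t : ℂ) :
    (fderiv ℝ (Feq ε q) t).det =
      ((ε ^ 2 + ‖t‖ ^ 2) / (1 + ε ^ 2)) ^ q *
        (1 + q * ‖t‖ ^ 2 / (ε ^ 2 + ‖t‖ ^ 2)) := by
  have h1 : (0:ℝ) < 1 + ε ^ 2 := by positivity
  have hu : (0:ℝ) < ε ^ 2 + ‖t‖ ^ 2 := by positivity
  set v : ℝ := (ε ^ 2 + ‖t‖ ^ 2) / (1 + ε ^ 2) with hv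
  have hvpos : 0 < v := div_pos hu h1
  have hg : HasFDerivAt (fun s : ℂ => (ε ^ 2 + ‖s‖ ^ 2) / (1 + ε ^ 2))
      ((1 + ε ^ 2)⁻¹ • ((2:ℝ) • (innerSL ℝ t))) t := by
    have h := (((hasFDerivAt_const (ε ^ 2) t).add ((hasFDerivAt_id t).norm_sq)).const_mul
      ((1 + ε ^ 2)⁻¹))
    have heq : (fun y : ℂ => (1 + ε ^ 2)⁻¹ * (((fun _ : ℂ => ε ^ 2) + fun x : ℂ => ‖id x‖ ^ 2) y)) =
        fun s : ℂ => (ε ^ 2 + ‖s‖ ^ 2) / (1 + ε ^ 2) := by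
      funext y; simp [div_eq_inv_mul]
    rw [heq] at h
    refine h.congr_fderiv ?_
    ext y
    simp; left; ring
  have hf : HasFDerivAt (fun s : ℂ => ((ε ^ 2 + ‖s‖ ^ 2) / (1 + ε ^ 2)) ^ (q / 2))
      ((q / 2 * v ^ (q / 2 - 1)) • ((1 + ε ^ 2)⁻¹ • ((2:ℝ) • (innerSL ℝ t)))) t :=
    hg.rpow_const (Or.inl hvpos.ne')
  have hF : HasFDerivAt (Feq ε q)
      ((v ^ (q / 2)) • (ContinuousLinearMap.id ℝ ℂ) +
        ((q / 2 * v ^ (q / 2 - 1)) • ((1 + ε ^ 2)⁻¹ • ((2:ℝ) • (innerSL ℝ t)))).smulRight t)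
      t := by
    have : Feq ε q = fun s : ℂ => ((ε ^ 2 + ‖s‖ ^ 2) / (1 + ε ^ 2)) ^ (q / 2) • s := by
      funext s; simp [Feq]
    rw [this]
    exact hf.smul (hasFDerivAt_id t)
  rw [hF.fderiv]
  set k : ℝ := q / 2 * v ^ (q / 2 - 1) * ((1 + ε ^ 2)⁻¹ * 2) with hk
  set a : ℝ := v ^ (q / 2) with ha
  rw [ContinuousLinearMap.det, ← LinearMap.det_toMatrix Complex.basisOneI,
    Matrix.det_fin_two]
  simp only [LinearMap.toMatrix_apply, Complex.coe_basisOneI, Matrix.cons_val_zero,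
    Matrix.cons_val_one, Matrix.head_cons, Complex.coe_basisOneI_repr,
    ContinuousLinearMap.coe_coe, ContinuousLinearMap.add_apply,
    ContinuousLinearMap.coe_smul', Pi.smul_apply, ContinuousLinearMap.id_apply,
    ContinuousLinearMap.smulRight_apply, innerSL_apply_apply, Complex.inner,
    Complex.add_re, Complex.add_im, Complex.smul_re, Complex.smul_im,
    smul_eq_mul, Complex.one_re, Complex.one_im, Complex.I_re, Complex.I_im,
    Complex.mul_re, Complex.mul_im, Complex.conj_re, Complex.conj_im]
  have habs : ‖t‖ ^ 2 = t.re ^ 2 + t.im ^ 2 := by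
    rw [Complex.sq_norm, Complex.normSq_apply]; ring
  have hnorm : ‖t‖ ^ 2 = t.re ^ 2 + t.im ^ 2 := by
    rw [habs]
  have h2 : a * a = v ^ q := by
    rw [ha, ← Real.rpow_add hvpos]; norm_num
  have h3 : a * v ^ (q / 2 - 1) = v ^ (q - 1) := by
    rw [ha, ← Real.rpow_add hvpos]; ring_nf
  have h4 : v ^ q = v ^ (q - 1) * v := by
    conv_lhs => rw [show q = (q - 1) + 1 by ring]
    rw [Real.rpow_add hvpos, Real.rpow_one]
  have hune : ε ^ 2 + (t.re ^ 2 + t.im ^ 2) ≠ 0 := by rw [← hnorm]; exact hu.ne'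
  have hvv : v = (ε ^ 2 + (t.re ^ 2 + t.im ^ 2)) / (1 + ε ^ 2) := by rw [hv, hnorm]
  have hvmul : v * (1 + ε ^ 2) = ε ^ 2 + (t.re ^ 2 + t.im ^ 2) := by
    rw [hvv]; field_simp
  rw [habs]
  have hR : ((ε ^ 2 + (t.re ^ 2 + t.im ^ 2)) / (1 + ε ^ 2)) ^ q *
      (1 + q * (t.re ^ 2 + t.im ^ 2) / (ε ^ 2 + (t.re ^ 2 + t.im ^ 2))) =
      v ^ q + q * v ^ (q - 1) * (t.re ^ 2 + t.im ^ 2) * (1 + ε ^ 2)⁻¹ := by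
    clear_value k a v
    rw [← hvv, h4, ← hvmul]
    have hv0 := hvpos.ne'
    have hc0 := h1.ne'
    field_simp
  rw [← hvv] at hR
  rw [hR]
  linear_combination h2 + q * (t.re ^ 2 + t.im ^ 2) * (1 + ε ^ 2)⁻¹ * h3

/-- Estimate (2.11): for every `q > 0` there is `C ≥ 1` depending only on `q` such that for
all `ε ∈ (0,1]` and `t` in the unit disk, the Jacobian determinant of `F_{ε,q}` viewed as a
smooth map `ℝ² → ℝ²` satisfies `C⁻¹ (ε² + |t|²)^q ≤ J_{ε,q}(t) ≤ C (ε² + |t|²)^q`. -/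
theorem stmt_1 (q : ℝ) (hq : 0 < q) :
    ∃ C : ℝ, 1 ≤ C ∧ ∀ ε ∈ Set.Ioc (0 : ℝ) 1, ∀ t ∈ ball (0 : ℂ) 1,
      C⁻¹ * (ε ^ 2 + ‖t‖ ^ 2) ^ q ≤ (fderiv ℝ (Feq ε q) t).det ∧
      (fderiv ℝ (Feq ε q) t).det ≤ C * (ε ^ 2 + ‖t‖ ^ 2) ^ q := by
  have h2q : (1:ℝ) ≤ 2 ^ q := Real.one_le_rpow (by norm_num) hq.le
  have h2qpos : (0:ℝ) < 2 ^ q := lt_of_lt_of_le one_pos h2q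
  refine ⟨2 ^ q * (1 + q), by nlinarith, ?_⟩
  intro ε hε t ht
  obtain ⟨hε0, hε1⟩ := hε
  have habs : ‖t‖ < 1 := by
    simpa using mem_ball_zero_iff.mp ht
  have habsnn : 0 ≤ ‖t‖ := norm_nonneg t
  set u := ε ^ 2 + ‖t‖ ^ 2 with hu'
  have hu : 0 < u := by positivity
  have h11 : 1 ≤ 1 + ε ^ 2 := by nlinarith
  have h12 : 1 + ε ^ 2 ≤ 2 := by nlinarith
  rw [jac_eq ε q hε0 t]
  have hfacnn : 0 ≤ q * ‖t‖ ^ 2 / u := by positivity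
  have hfac1 : 1 ≤ 1 + q * ‖t‖ ^ 2 / u := by linarith
  have hfac2 : 1 + q * ‖t‖ ^ 2 / u ≤ 1 + q := by
    have hle : ‖t‖ ^ 2 / u ≤ 1 := by
      rw [div_le_one hu]; nlinarith
    have : q * ‖t‖ ^ 2 / u ≤ q := by
      rw [mul_div_assoc]
      nlinarith
    linarith
  have hvnn : (0:ℝ) ≤ u / (1 + ε ^ 2) := by positivity
  have hlow : u ^ q / 2 ^ q ≤ (u / (1 + ε ^ 2)) ^ q := by
    rw [← Real.div_rpow hu.le (by norm_num : (0:ℝ) ≤ 2)]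
    exact Real.rpow_le_rpow (by positivity) (by gcongr) hq.le
  have hupp : (u / (1 + ε ^ 2)) ^ q ≤ u ^ q :=
    Real.rpow_le_rpow hvnn (div_le_self hu.le h11) hq.le
  have huq : (0:ℝ) ≤ u ^ q := Real.rpow_nonneg hu.le q
  constructor
  · calc (2 ^ q * (1 + q))⁻¹ * u ^ q ≤ (2 ^ q)⁻¹ * u ^ q := by
          apply mul_le_mul_of_nonneg_right _ huq
          apply inv_anti₀ h2qpos
          nlinarith
      _ = u ^ q / 2 ^ q := by rw [inv_mul_eq_div]
      _ ≤ (u / (1 + ε ^ 2)) ^ q := hlow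
      _ ≤ (u / (1 + ε ^ 2)) ^ q * (1 + q * ‖t‖ ^ 2 / u) :=
          le_mul_of_one_le_right (Real.rpow_nonneg hvnn q) hfac1
  · calc (u / (1 + ε ^ 2)) ^ q * (1 + q * ‖t‖ ^ 2 / u)
        ≤ u ^ q * (1 + q) := by
          apply mul_le_mul hupp hfac2 (by linarith) huq
      _ ≤ 2 ^ q * (1 + q) * u ^ q := by
          nlinarith [mul_nonneg huq (by linarith : (0:ℝ) ≤ 1 + q)]
end

section
/- For every q > 0 there exists a constant C > 0, depending only on q, with the following property: for every ε ∈ (0,1], if G_{ε,q} : 𝔻 → 𝔻 denotes the inverse of the bijection F_{ε,q} : 𝔻 → 𝔻, then G_{ε,q} is differentiable and its real Fréchet derivative satisfies ‖DG_{ε,q}(w)‖ ≤ C (ε² + |w|²)^{-q/2} for all w ∈ 𝔻. -/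
/-!
Writing `F(t) = φ(|t|²) t` with `φ(r) = ((ε² + r)/(1 + ε²))^{q/2}` increasing, the derivative is
`DF(t) = φ(|t|²) id + 2φ'(|t|²) ⟨t, ·⟩ t`, hence `⟨DF(t) h, h⟩ ≥ φ(|t|²) |h|²`. By Lax–Milgram
`DF(t)` is invertible with `‖DF(t)⁻¹‖ ≤ φ(|t|²)⁻¹`, and by the inverse function theorem
`DG(w) = DF(G w)⁻¹`. Finally `|w| ≤ |G w|` because `φ ≤ 1` on the disk, and `1 + ε² ≤ 2`.
-/

open Metric Set

open scoped RealInnerProductSpace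

section Hilbert

variable {V : Type*} [NormedAddCommGroup V] [InnerProductSpace ℝ V]

theorem hasStrictFDerivAt_smul_self_of_norm_sq {g : ℝ → ℝ} {g' : ℝ} {x : V}
    (hg : HasStrictDerivAt g g' (‖x‖ ^ 2)) :
    HasStrictFDerivAt (fun y : V => g (‖y‖ ^ 2) • y)
      (g (‖x‖ ^ 2) • ContinuousLinearMap.id ℝ V + (2 * g') • (innerSL ℝ x).smulRight x) x := by
  refine ((hg.comp_hasStrictFDerivAt x (hasStrictFDerivAt_norm_sq x)).smul
    (hasStrictFDerivAt_id x)).congr_fderiv ?_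
  ext h
  simp [smul_smul, mul_assoc, mul_left_comm]

theorem mul_norm_sq_le_inner_smul_id_add_smulRight_self {a c : ℝ} (hc : 0 ≤ c) (x h : V) :
    a * ‖h‖ ^ 2 ≤ ⟪(a • ContinuousLinearMap.id ℝ V + c • (innerSL ℝ x).smulRight x) h, h⟫ := by
  have hexpand : ⟪(a • ContinuousLinearMap.id ℝ V + c • (innerSL ℝ x).smulRight x) h, h⟫ =
      a * ‖h‖ ^ 2 + c * ⟪x, h⟫ ^ 2 := by
    simp [inner_add_left, inner_smul_left, sq]
  rw [hexpand]
  exact le_add_of_nonneg_right (by positivity)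

theorem exists_continuousLinearEquiv_opNorm_symm_le_of_coercive [CompleteSpace V]
    (f : V →L[ℝ] V) {a : ℝ} (ha : 0 < a) (hf : ∀ h, a * ‖h‖ ^ 2 ≤ ⟪f h, h⟫) :
    ∃ e : V ≃L[ℝ] V, (e : V →L[ℝ] V) = f ∧ ‖(e.symm : V →L[ℝ] V)‖ ≤ a⁻¹ := by
  have hB : IsCoercive ((innerSL ℝ).comp f) :=
    ⟨a, ha, fun h => by simpa [sq, mul_assoc] using hf h⟩
  set e := hB.continuousLinearEquivOfBilin
  have he : ∀ h, e h = f h := fun h =>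
    ext_inner_right ℝ fun k => by simp [e]
  refine ⟨e, ContinuousLinearMap.ext he, ?_⟩
  have hbelow : ∀ h, a * ‖h‖ ≤ ‖f h‖ := fun h => by
    rcases (norm_nonneg h).eq_or_lt with h0 | hpos
    · simp [← h0]
    · refine le_of_mul_le_mul_right ?_ hpos
      calc a * ‖h‖ * ‖h‖ = a * ‖h‖ ^ 2 := by ring
        _ ≤ ⟪f h, h⟫ := hf h
        _ ≤ ‖f h‖ * ‖h‖ := real_inner_le_norm _ _
  refine ContinuousLinearMap.opNorm_le_bound _ (inv_nonneg.2 ha.le) fun u => ?_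
  rw [le_inv_mul_iff₀ ha]
  simpa [← he] using hbelow (e.symm u)

theorem exists_hasStrictFDerivAt_smul_self_of_norm_sq [CompleteSpace V] {g : ℝ → ℝ} {g' : ℝ}
    {x : V} (hg : HasStrictDerivAt g g' (‖x‖ ^ 2)) (hpos : 0 < g (‖x‖ ^ 2)) (hg' : 0 ≤ g') :
    ∃ e : V ≃L[ℝ] V, HasStrictFDerivAt (fun y : V => g (‖y‖ ^ 2) • y) (e : V →L[ℝ] V) x ∧
      ‖(e.symm : V →L[ℝ] V)‖ ≤ (g (‖x‖ ^ 2))⁻¹ := by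
  obtain ⟨e, he, hesymm⟩ := exists_continuousLinearEquiv_opNorm_symm_le_of_coercive _ hpos
    (mul_norm_sq_le_inner_smul_id_add_smulRight_self (by positivity : 0 ≤ 2 * g') x)
  exact ⟨e, he ▸ hasStrictFDerivAt_smul_self_of_norm_sq hg, hesymm⟩

end Hilbert

noncomputable def feqScale (ε q r : ℝ) : ℝ := ((ε ^ 2 + r) / (1 + ε ^ 2)) ^ (q / 2)

theorem Feq_eq_smul (ε q : ℝ) (t : ℂ) : Feq ε q t = feqScale ε q (‖t‖ ^ 2) • t := rfl

theorem feqScale_pos {ε : ℝ} (q : ℝ) {r : ℝ} (hε : 0 < ε) (hr : 0 ≤ r) : 0 < feqScale ε q r := by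
  unfold feqScale; positivity

theorem hasStrictDerivAt_feqScale {ε r : ℝ} (q : ℝ) (hε : 0 < ε) (hr : 0 ≤ r) :
    HasStrictDerivAt (feqScale ε q)
      (q / 2 * ((ε ^ 2 + r) / (1 + ε ^ 2)) ^ (q / 2 - 1) * (1 + ε ^ 2)⁻¹) r := by
  have hbase : HasStrictDerivAt (fun r : ℝ => (ε ^ 2 + r) / (1 + ε ^ 2)) (1 + ε ^ 2)⁻¹ r := by
    simpa [div_eq_mul_inv] using ((hasStrictDerivAt_id r).const_add (ε ^ 2)).mul_const (1 + ε ^ 2)⁻¹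
  exact (Real.hasStrictDerivAt_rpow_const_of_ne (by positivity) (q / 2)).comp r hbase

theorem exists_hasStrictFDerivAt_Feq {ε q : ℝ} (hε : 0 < ε) (hq : 0 ≤ q) (t : ℂ) :
    ∃ e : ℂ ≃L[ℝ] ℂ, HasStrictFDerivAt (Feq ε q) (e : ℂ →L[ℝ] ℂ) t ∧
      ‖(e.symm : ℂ →L[ℝ] ℂ)‖ ≤ (feqScale ε q (‖t‖ ^ 2))⁻¹ := by
  have hr : 0 ≤ ‖t‖ ^ 2 := by positivity
  exact exists_hasStrictFDerivAt_smul_self_of_norm_sq (hasStrictDerivAt_feqScale q hε hr)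
    (feqScale_pos q hε hr) (by positivity)

theorem norm_Feq_le {ε q : ℝ} (hq : 0 ≤ q) {t : ℂ} (ht : ‖t‖ ≤ 1) : ‖Feq ε q t‖ ≤ ‖t‖ := by
  have hscale : |feqScale ε q (‖t‖ ^ 2)| ≤ 1 := by
    unfold feqScale
    rw [abs_of_nonneg (by positivity)]
    refine Real.rpow_le_one (by positivity) ((div_le_one (by positivity)).2 ?_) (by positivity)
    nlinarith [norm_nonneg t]
  rw [Feq_eq_smul, norm_smul, Real.norm_eq_abs]
  exact mul_le_of_le_one_left (norm_nonneg t) hscale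

theorem inv_feqScale_le {ε q r s : ℝ} (hε : 0 < ε) (hε1 : ε ≤ 1) (hq : 0 ≤ q) (hs : 0 ≤ s)
    (hsr : s ≤ r) : (feqScale ε q r)⁻¹ ≤ 2 ^ (q / 2) * (ε ^ 2 + s) ^ (-q / 2) := by
  have hεs : 0 < ε ^ 2 + s := by positivity
  calc (feqScale ε q r)⁻¹ = (1 + ε ^ 2) ^ (q / 2) * (ε ^ 2 + r) ^ (-q / 2) := by
        rw [feqScale, Real.div_rpow (by linarith) (by positivity), inv_div,
          div_eq_mul_inv, neg_div, Real.rpow_neg (by linarith)]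
    _ ≤ 2 ^ (q / 2) * (ε ^ 2 + s) ^ (-q / 2) := by
        have h1 : (1 + ε ^ 2) ^ (q / 2) ≤ (2 : ℝ) ^ (q / 2) :=
          Real.rpow_le_rpow (by positivity) (by nlinarith) (by positivity)
        have h2 : (ε ^ 2 + r) ^ (-q / 2) ≤ (ε ^ 2 + s) ^ (-q / 2) :=
          Real.rpow_le_rpow_of_nonpos hεs (by linarith) (by linarith)
        exact mul_le_mul h1 h2 (Real.rpow_nonneg (by linarith) _) (by positivity)

/-- Estimate (2.12): for every `q > 0` there is `C > 0` depending only on `q` such that for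
every `ε ∈ (0,1]`, the inverse `G_{ε,q}` of the bijection `F_{ε,q} : 𝔻 → 𝔻` is differentiable
and its real Fréchet derivative satisfies `‖DG_{ε,q}(w)‖ ≤ C (ε² + |w|²)^{-q/2}` on `𝔻`. -/
theorem stmt_2 (q : ℝ) (hq : 0 < q) :
    ∃ C : ℝ, 0 < C ∧ ∀ ε ∈ Set.Ioc (0 : ℝ) 1, ∀ G : ℂ → ℂ,
      Set.InvOn G (Feq ε q) (ball (0 : ℂ) 1) (ball (0 : ℂ) 1) →
      Set.MapsTo G (ball (0 : ℂ) 1) (ball (0 : ℂ) 1) →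
      ∀ w ∈ ball (0 : ℂ) 1,
        DifferentiableAt ℝ G w ∧
        ‖fderiv ℝ G w‖ ≤ C * (ε ^ 2 + ‖w‖ ^ 2) ^ (-q / 2) := by
  refine ⟨2 ^ (q / 2), by positivity, ?_⟩
  rintro ε ⟨hε, hε1⟩ G hinv hmaps w hw
  have ht : G w ∈ ball (0 : ℂ) 1 := hmaps hw
  have hFGw : Feq ε q (G w) = w := hinv.2 hw
  obtain ⟨e, hF, he⟩ := exists_hasStrictFDerivAt_Feq hε hq.le (G w)
  have hG : HasStrictFDerivAt G (e.symm : ℂ →L[ℝ] ℂ) w := by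
    simpa only [hFGw] using
      hF.to_local_left_inverse (Filter.eventually_of_mem (isOpen_ball.mem_nhds ht) hinv.1)
  have hnorm : ‖w‖ ≤ ‖G w‖ := by
    simpa only [hFGw] using norm_Feq_le (ε := ε) hq.le (mem_ball_zero_iff.1 ht).le
  refine ⟨hG.differentiableAt, hG.hasFDerivAt.fderiv ▸ he.trans ?_⟩
  exact inv_feqScale_le hε hε1 hq.le (by positivity) (by gcongr)
end

section
/- There exists a constant C ≥ 1 depending only on q₁, …, q_d (and n) such that for every ε ∈ (0,1] and every Borel measurable function g : Ω → [0,∞], one has C^{-1} ∫_Ω g dλ ≤ ∫_Ω g(Φ_ε(z)) · ∏_{α=1}^{d} (ε² + |z_α|²)^{q_α} dλ(z) ≤ C ∫_Ω g dλ, where Φ_ε(z) := (F_{ε,q₁}(z₁), …, F_{ε,q_d}(z_d), z_{d+1}, …, z_n). -/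
/-!
Each transformed coordinate is moved by a radial map `t ↦ a(|t|²) t`, here with
`a(s) = v(s)^{q/2}`, `v(s) = (ε² + s)/(1 + ε²)`. Its radial profile `r ↦ a(r²) r` increases
strictly from `0` to `1` on `[0, 1]`, so the map is a bijection of the disk. The Jacobian
determinant of a radial map is `a (a + 2 s a'(s))` at `s = |t|²`, which here equals
`v^q (1 + q s/(ε² + s))`; for `ε ≤ 1` this lies between `2^{-q} (ε² + s)^q` and
`(1 + q)(ε² + s)^q`. As `Φ_ε` acts coordinatewise, its Jacobian is the product of these factors,
and the change-of-variables formula turns the pointwise comparison into the integral estimate.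
-/

open Metric Set MeasureTheory
open scoped ENNReal

section ChangeOfVariables

variable {E : Type*} [NormedAddCommGroup E] [NormedSpace ℝ E] [FiniteDimensional ℝ E]
  [MeasurableSpace E] [BorelSpace E] {μ : Measure E} [μ.IsAddHaarMeasure]
  {f : E → E} {f' : E → E →L[ℝ] E} {s t : Set E} {w : E → ℝ} {C : ℝ}

theorem ofReal_inv_mul_lintegral_le_lintegral_comp_mul (hs : MeasurableSet s)
    (hf' : ∀ x ∈ s, HasFDerivWithinAt f (f' x) s x) (hf : BijOn f s t) (hC : 0 < C)
    (hdet : ∀ x ∈ s, |(f' x).det| ≤ C * w x) (g : E → ℝ≥0∞) :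
    ENNReal.ofReal C⁻¹ * ∫⁻ x in t, g x ∂μ ≤
      ∫⁻ x in s, g (f x) * ENNReal.ofReal (w x) ∂μ := by
  rw [ENNReal.ofReal_inv_of_pos hC,
    ENNReal.inv_mul_le_iff (ENNReal.ofReal_pos.2 hC).ne' ENNReal.ofReal_ne_top,
    ← hf.image_eq, lintegral_image_eq_lintegral_abs_det_fderiv_mul μ hs hf' hf.injOn,
    ← lintegral_const_mul' _ _ ENNReal.ofReal_ne_top]
  refine setLIntegral_mono' hs fun x hx => ?_
  calc ENNReal.ofReal |(f' x).det| * g (f x) ≤ ENNReal.ofReal (C * w x) * g (f x) := by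
        gcongr; exact hdet x hx
    _ = _ := by rw [ENNReal.ofReal_mul hC.le]; ring

theorem lintegral_comp_mul_le_ofReal_mul_lintegral (hs : MeasurableSet s)
    (hf' : ∀ x ∈ s, HasFDerivWithinAt f (f' x) s x) (hf : BijOn f s t) (hC : 0 ≤ C)
    (hw : ∀ x ∈ s, w x ≤ C * |(f' x).det|) (g : E → ℝ≥0∞) :
    ∫⁻ x in s, g (f x) * ENNReal.ofReal (w x) ∂μ ≤
      ENNReal.ofReal C * ∫⁻ x in t, g x ∂μ := by
  rw [← hf.image_eq, lintegral_image_eq_lintegral_abs_det_fderiv_mul μ hs hf' hf.injOn,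
    ← lintegral_const_mul' _ _ ENNReal.ofReal_ne_top]
  refine setLIntegral_mono' hs fun x hx => ?_
  calc g (f x) * ENNReal.ofReal (w x) ≤ g (f x) * ENNReal.ofReal (C * |(f' x).det|) := by
        gcongr; exact hw x hx
    _ = _ := by rw [ENNReal.ofReal_mul hC]; ring

end ChangeOfVariables

theorem Set.BijOn.piMap {ι : Type*} {α β : ι → Type*} {f : ∀ i, α i → β i}
    {s : ∀ i, Set (α i)} {t : ∀ i, Set (β i)} (h : ∀ i, BijOn (f i) (s i) (t i)) :
    BijOn (Pi.map f) (univ.pi s) (univ.pi t) := by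
  refine ⟨piMap_mapsTo_pi fun i _ => (h i).mapsTo, fun x hx y hy hxy => ?_, ?_⟩
  · exact funext fun i => (h i).injOn (hx i trivial) (hy i trivial) (congrFun hxy i)
  · rw [SurjOn, piMap_image_univ_pi]
    exact pi_mono fun i _ => (h i).surjOn

theorem hasFDerivAt_piMap {𝕜 ι : Type*} [NontriviallyNormedField 𝕜] [Fintype ι]
    {E : ι → Type*} [∀ i, NormedAddCommGroup (E i)] [∀ i, NormedSpace 𝕜 (E i)]
    {φ : ∀ i, E i → E i} {x : ∀ i, E i} (h : ∀ i, DifferentiableAt 𝕜 (φ i) (x i)) :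
    HasFDerivAt (Pi.map φ)
      (ContinuousLinearMap.pi fun i =>
        (fderiv 𝕜 (φ i) (x i)).comp (ContinuousLinearMap.proj i)) x := by
  refine hasFDerivAt_pi'' fun i => ?_
  rw [ContinuousLinearMap.proj_pi]
  exact (h i).hasFDerivAt.comp x (hasFDerivAt_apply i x)

theorem hasFDerivAt_smul_norm_sq {E : Type*} [NormedAddCommGroup E] [InnerProductSpace ℝ E]
    {a : ℝ → ℝ} {a' : ℝ} {x : E} (ha : HasDerivAt a a' (‖x‖ ^ 2)) :
    HasFDerivAt (fun y => a (‖y‖ ^ 2) • y)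
      (a (‖x‖ ^ 2) • ContinuousLinearMap.id ℝ E + ((2 * a') • innerSL ℝ x).smulRight x)
      x := by
  refine ((ha.comp_hasFDerivAt x (hasStrictFDerivAt_norm_sq x).hasFDerivAt).smul
    (hasFDerivAt_id x)).congr_fderiv ?_
  rw [mul_comm, mul_smul, two_smul, two_smul]
  rfl

theorem Complex.det_smul_id_add_smulRight_innerSL (a b : ℝ) (t : ℂ) :
    (a • ContinuousLinearMap.id ℝ ℂ + (b • innerSL ℝ t).smulRight t).det =
      a * (a + b * ‖t‖ ^ 2) := by
  rw [ContinuousLinearMap.det, ← LinearMap.det_toMatrix Complex.basisOneI, Matrix.det_fin_two]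
  simp [LinearMap.toMatrix_apply, Complex.sq_norm, Complex.normSq_apply]
  ring

namespace Feq

variable {ε q s : ℝ}

noncomputable def scale (ε q s : ℝ) : ℝ := ((ε ^ 2 + s) / (1 + ε ^ 2)) ^ (q / 2)

/-- The Jacobian determinant of `Feq ε q` at `t`, as a function of `s = ‖t‖ ^ 2`. -/
noncomputable def jacobian (ε q s : ℝ) : ℝ :=
  ((ε ^ 2 + s) / (1 + ε ^ 2)) ^ q * (1 + q * s / (ε ^ 2 + s))

theorem eq_smul (ε q : ℝ) (t : ℂ) : Feq ε q t = scale ε q (‖t‖ ^ 2) • t := rfl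

theorem scale_pos (hε : 0 < ε) (hs : 0 ≤ s) : 0 < scale ε q s := by
  unfold scale; positivity

theorem scale_le_scale (hε : 0 < ε) (hq : 0 ≤ q) {s' : ℝ} (hs : 0 ≤ s) (hss' : s ≤ s') :
    scale ε q s ≤ scale ε q s' := by
  unfold scale; gcongr

theorem scale_one (ε q : ℝ) : scale ε q 1 = 1 := by
  rw [scale, add_comm, div_self (by positivity), Real.one_rpow]

theorem hasDerivAt_scale (hε : 0 < ε) (hs : 0 ≤ s) :
    HasDerivAt (scale ε q)
      (q / 2 * ((ε ^ 2 + s) / (1 + ε ^ 2)) ^ (q / 2 - 1) / (1 + ε ^ 2)) s := by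
  have hinner : HasDerivAt (fun s : ℝ => (ε ^ 2 + s) / (1 + ε ^ 2)) (1 / (1 + ε ^ 2)) s := by
    simpa using ((hasDerivAt_id s).const_add (ε ^ 2)).div_const (1 + ε ^ 2)
  exact ((Real.hasDerivAt_rpow_const (p := q / 2) (Or.inl (by positivity))).comp s
    hinner).congr_deriv (by ring)

theorem scale_mul_scale_add (hε : 0 < ε) (hs : 0 ≤ s) :
    scale ε q s * (scale ε q s +
        2 * (q / 2 * ((ε ^ 2 + s) / (1 + ε ^ 2)) ^ (q / 2 - 1) / (1 + ε ^ 2)) * s) =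
      jacobian ε q s := by
  set v := (ε ^ 2 + s) / (1 + ε ^ 2) with hv_def
  have hv : 0 < v := by positivity
  have hv' : v * (1 + ε ^ 2) = ε ^ 2 + s := by rw [hv_def]; field_simp
  have hsq : v ^ (q / 2) * v ^ (q / 2) = v ^ q := by rw [← Real.rpow_add hv]; ring_nf
  have hpred : v ^ (q / 2) * v ^ (q / 2 - 1) = v ^ q / v := by
    rw [← Real.rpow_add hv, ← Real.rpow_sub_one hv.ne']; ring_nf
  calc scale ε q s * (scale ε q s + 2 * (q / 2 * v ^ (q / 2 - 1) / (1 + ε ^ 2)) * s)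
      = v ^ (q / 2) * v ^ (q / 2) + q * s * (v ^ (q / 2) * v ^ (q / 2 - 1)) / (1 + ε ^ 2) := by
        rw [scale]; ring
    _ = v ^ q * (1 + q * s / (v * (1 + ε ^ 2))) := by
        rw [hsq, hpred]; field_simp
    _ = jacobian ε q s := by rw [hv', jacobian]

theorem hasFDerivAt (hε : 0 < ε) (t : ℂ) :
    HasFDerivAt (Feq ε q)
      (scale ε q (‖t‖ ^ 2) • ContinuousLinearMap.id ℝ ℂ +
        ((2 * (q / 2 * ((ε ^ 2 + ‖t‖ ^ 2) / (1 + ε ^ 2)) ^ (q / 2 - 1) / (1 + ε ^ 2))) •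
          innerSL ℝ t).smulRight t) t :=
  hasFDerivAt_smul_norm_sq (hasDerivAt_scale hε (by positivity))

theorem differentiable (hε : 0 < ε) : Differentiable ℝ (Feq ε q) :=
  fun t => (hasFDerivAt hε t).differentiableAt

theorem det_fderiv (hε : 0 < ε) (t : ℂ) :
    (fderiv ℝ (Feq ε q) t).det = jacobian ε q (‖t‖ ^ 2) := by
  rw [(hasFDerivAt hε t).fderiv, Complex.det_smul_id_add_smulRight_innerSL]
  exact scale_mul_scale_add hε (by positivity)

theorem jacobian_pos (hε : 0 < ε) (hq : 0 ≤ q) (hs : 0 ≤ s) : 0 < jacobian ε q s := by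
  unfold jacobian; positivity

theorem jacobian_le (hε : 0 < ε) (hq : 0 ≤ q) (hs : 0 ≤ s) :
    jacobian ε q s ≤ (1 + q) * 2 ^ q * (ε ^ 2 + s) ^ q := by
  have hu : 0 < ε ^ 2 + s := by positivity
  have hfrac : q * s / (ε ^ 2 + s) ≤ q := by
    rw [mul_div_assoc]
    exact mul_le_of_le_one_right hq ((div_le_one hu).2 (by linarith [pow_pos hε 2]))
  calc jacobian ε q s ≤ (ε ^ 2 + s) ^ q * (1 + q) := by
        unfold jacobian
        gcongr
        exact div_le_self hu.le (by nlinarith)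
    _ ≤ (ε ^ 2 + s) ^ q * ((1 + q) * 2 ^ q) := by
        gcongr
        exact le_mul_of_one_le_right (by linarith) (Real.one_le_rpow (by norm_num) hq)
    _ = _ := by ring

theorem rpow_le_mul_jacobian (hε : 0 < ε) (hε1 : ε ≤ 1) (hq : 0 ≤ q) (hs : 0 ≤ s) :
    (ε ^ 2 + s) ^ q ≤ (1 + q) * 2 ^ q * jacobian ε q s := by
  have hv : (1 + ε ^ 2) * ((ε ^ 2 + s) / (1 + ε ^ 2)) = ε ^ 2 + s := by field_simp
  calc (ε ^ 2 + s) ^ q = (1 + ε ^ 2) ^ q * ((ε ^ 2 + s) / (1 + ε ^ 2)) ^ q := by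
        rw [← Real.mul_rpow (by positivity) (by positivity), hv]
    _ ≤ (1 * 2 ^ q) * (((ε ^ 2 + s) / (1 + ε ^ 2)) ^ q * 1) := by
        rw [one_mul, mul_one]
        gcongr
        nlinarith
    _ ≤ (1 + q) * 2 ^ q * jacobian ε q s := by
        unfold jacobian
        gcongr
        · linarith
        · exact le_add_of_nonneg_right (by positivity)

noncomputable def profile (ε q r : ℝ) : ℝ := scale ε q (r ^ 2) * r

theorem norm_eq_profile (hε : 0 < ε) (t : ℂ) : ‖Feq ε q t‖ = profile ε q ‖t‖ := by
  rw [eq_smul, norm_smul, Real.norm_of_nonneg (scale_pos hε (by positivity)).le, profile]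

theorem profile_one (ε q : ℝ) : profile ε q 1 = 1 := by
  rw [profile, one_pow, scale_one, one_mul]

theorem strictMonoOn_profile (hε : 0 < ε) (hq : 0 ≤ q) : StrictMonoOn (profile ε q) (Ici 0) :=
  fun r hr r' hr' hrr' => mul_lt_mul' (scale_le_scale hε hq (by positivity) (by gcongr))
    hrr' hr (scale_pos hε (by positivity))

theorem continuous_profile (hε : 0 < ε) : Continuous (profile ε q) := by
  have hbase : Continuous fun r : ℝ => (ε ^ 2 + r ^ 2) / (1 + ε ^ 2) := by fun_prop
  exact (hbase.rpow_const fun r => Or.inl (by positivity)).mul continuous_id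

theorem injective (hε : 0 < ε) (hq : 0 ≤ q) : Function.Injective (Feq ε q) := by
  intro t t' h
  have hnorm : ‖t‖ = ‖t'‖ :=
    (strictMonoOn_profile hε hq).injOn (norm_nonneg t) (norm_nonneg t') <| by
      rw [← norm_eq_profile hε, ← norm_eq_profile hε, h]
  rw [eq_smul, eq_smul, hnorm] at h
  exact smul_right_injective ℂ (scale_pos hε (by positivity)).ne' h

theorem mapsTo_ball (hε : 0 < ε) (hq : 0 ≤ q) : MapsTo (Feq ε q) (ball 0 1) (ball 0 1) := by
  intro t ht
  rw [mem_ball_zero_iff] at ht ⊢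
  rw [norm_eq_profile hε, ← profile_one ε q]
  exact strictMonoOn_profile hε hq (norm_nonneg t) (by norm_num) ht

theorem surjOn_ball (hε : 0 < ε) : SurjOn (Feq ε q) (ball 0 1) (ball 0 1) := by
  intro w hw
  rw [mem_ball_zero_iff] at hw
  rcases eq_or_ne w 0 with rfl | hw0
  · exact ⟨0, mem_ball_self one_pos, by simp [Feq]⟩
  have hw' : 0 < ‖w‖ := norm_pos_iff.2 hw0
  obtain ⟨r, ⟨hr0, hr1⟩, hr⟩ : ‖w‖ ∈ profile ε q '' Ico 0 1 :=
    intermediate_value_Ico zero_le_one (continuous_profile hε).continuousOn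
      ⟨by simp [profile, hw'.le], by rwa [profile_one]⟩
  have hnorm : ‖(r / ‖w‖) • w‖ = r := by
    rw [norm_smul, Real.norm_of_nonneg (by positivity), div_mul_cancel₀ _ hw'.ne']
  refine ⟨(r / ‖w‖) • w, by rwa [mem_ball_zero_iff, hnorm], ?_⟩
  rw [eq_smul, hnorm, smul_smul, ← mul_div_assoc, ← profile, hr, div_self hw'.ne', one_smul]

theorem bijOn_ball (hε : 0 < ε) (hq : 0 ≤ q) : BijOn (Feq ε q) (ball 0 1) (ball 0 1) :=
  ⟨mapsTo_ball hε hq, (injective hε hq).injOn, surjOn_ball hε⟩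

end Feq

theorem Finset.prod_le_prod_mul_prod {ι : Type*} {s : Finset ι} {f g c : ι → ℝ}
    (hf : ∀ i ∈ s, 0 ≤ f i) (h : ∀ i ∈ s, f i ≤ c i * g i) :
    ∏ i ∈ s, f i ≤ (∏ i ∈ s, c i) * ∏ i ∈ s, g i :=
  Finset.prod_mul_distrib (f := c) (g := g) ▸ Finset.prod_le_prod hf h

section PiFeq

variable {ι : Type*} (p : ι → Prop) [DecidablePred p] {ε : ℝ} (q : ι → ℝ)

/-- The map `Φ_ε`; the paper's transformed coordinates `i < d` are those with `p i` here. -/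
noncomputable def piFeq (ε : ℝ) (z : ι → ℂ) : ι → ℂ :=
  fun i => if p i then Feq ε (q i) (z i) else z i

theorem piFeq_eq_piMap (ε : ℝ) :
    piFeq p q ε = Pi.map fun i => if p i then Feq ε (q i) else id := by
  funext z i
  by_cases h : p i <;> simp [piFeq, h]

theorem bijOn_piFeq (hε : 0 < ε) (hq : ∀ i, p i → 0 ≤ q i) :
    BijOn (piFeq p q ε) (univ.pi fun _ => ball 0 1) (univ.pi fun _ => ball 0 1) := by
  rw [piFeq_eq_piMap]
  refine .piMap fun i => ?_
  split_ifs with h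
  exacts [Feq.bijOn_ball hε (hq i h), bijOn_id _]

theorem differentiable_piFeq_component (hε : 0 < ε) (i : ι) :
    Differentiable ℝ (if p i then Feq ε (q i) else id) := by
  split_ifs
  exacts [Feq.differentiable hε, differentiable_id]

variable [Fintype ι]

theorem differentiable_piFeq (hε : 0 < ε) : Differentiable ℝ (piFeq p q ε) := by
  rw [piFeq_eq_piMap]
  exact fun z => (hasFDerivAt_piMap fun i =>
    (differentiable_piFeq_component p q hε i).differentiableAt).differentiableAt

theorem det_fderiv_piFeq (hε : 0 < ε) (z : ι → ℂ) :
    (fderiv ℝ (piFeq p q ε) z).det =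
      ∏ i ∈ Finset.univ.filter p, Feq.jacobian ε (q i) (‖z i‖ ^ 2) := by
  rw [piFeq_eq_piMap, (hasFDerivAt_piMap fun i =>
    (differentiable_piFeq_component p q hε i).differentiableAt).fderiv,
    ContinuousLinearMap.det_pi, Finset.prod_filter]
  refine Finset.prod_congr rfl fun i _ => ?_
  split_ifs
  · exact Feq.det_fderiv hε (z i)
  · rw [fderiv_id, ContinuousLinearMap.det, ContinuousLinearMap.coe_id, LinearMap.det_id]

variable {p q}

theorem abs_det_fderiv_piFeq_le (hε : 0 < ε) (hq : ∀ i, p i → 0 ≤ q i) (z : ι → ℂ) :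
    |(fderiv ℝ (piFeq p q ε) z).det| ≤
      (∏ i ∈ Finset.univ.filter p, (1 + q i) * 2 ^ q i) *
        ∏ i ∈ Finset.univ.filter p, (ε ^ 2 + ‖z i‖ ^ 2) ^ q i := by
  have hq' : ∀ i ∈ Finset.univ.filter p, 0 ≤ q i := fun i hi =>
    hq i (Finset.mem_filter.1 hi).2
  rw [det_fderiv_piFeq p q hε, abs_of_nonneg (Finset.prod_nonneg fun i hi =>
    (Feq.jacobian_pos hε (hq' i hi) (by positivity)).le)]
  exact Finset.prod_le_prod_mul_prod
    (fun i hi => (Feq.jacobian_pos hε (hq' i hi) (by positivity)).le)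
    (fun i hi => Feq.jacobian_le hε (hq' i hi) (by positivity))

theorem prod_le_abs_det_fderiv_piFeq (hε : 0 < ε) (hε1 : ε ≤ 1)
    (hq : ∀ i, p i → 0 ≤ q i) (z : ι → ℂ) :
    ∏ i ∈ Finset.univ.filter p, (ε ^ 2 + ‖z i‖ ^ 2) ^ q i ≤
      (∏ i ∈ Finset.univ.filter p, (1 + q i) * 2 ^ q i) *
        |(fderiv ℝ (piFeq p q ε) z).det| := by
  have hq' : ∀ i ∈ Finset.univ.filter p, 0 ≤ q i := fun i hi =>
    hq i (Finset.mem_filter.1 hi).2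
  calc ∏ i ∈ Finset.univ.filter p, (ε ^ 2 + ‖z i‖ ^ 2) ^ q i
      ≤ (∏ i ∈ Finset.univ.filter p, (1 + q i) * 2 ^ q i) *
          ∏ i ∈ Finset.univ.filter p, Feq.jacobian ε (q i) (‖z i‖ ^ 2) :=
        Finset.prod_le_prod_mul_prod (fun i _ => by positivity)
          (fun i hi => Feq.rpow_le_mul_jacobian hε hε1 (hq' i hi) (by positivity))
    _ ≤ _ := by
        rw [← det_fderiv_piFeq p q hε]
        exact mul_le_mul_of_nonneg_left (le_abs_self _)
          (Finset.prod_nonneg fun i hi => mul_nonneg (by linarith [hq' i hi]) (by positivity))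

end PiFeq

theorem stmt_3_general (n d : ℕ) (q : Fin n → ℝ)
    (hq : ∀ i : Fin n, (i : ℕ) < d → 0 < q i) :
    ∃ C : ℝ, 1 ≤ C ∧ ∀ ε ∈ Set.Ioc (0 : ℝ) 1,
      ∀ g : (Fin n → ℂ) → ℝ≥0∞, Measurable g →
        ENNReal.ofReal C⁻¹ * (∫⁻ z in {z : Fin n → ℂ | ∀ i, ‖z i‖ < 1}, g z) ≤
          (∫⁻ z in {z : Fin n → ℂ | ∀ i, ‖z i‖ < 1},
            g (fun i => if (i : ℕ) < d then Feq ε (q i) (z i) else z i) *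
              ENNReal.ofReal
                (∏ i ∈ Finset.univ.filter (fun i : Fin n => (i : ℕ) < d),
                  (ε ^ 2 + ‖z i‖ ^ 2) ^ (q i))) ∧
        (∫⁻ z in {z : Fin n → ℂ | ∀ i, ‖z i‖ < 1},
            g (fun i => if (i : ℕ) < d then Feq ε (q i) (z i) else z i) *
              ENNReal.ofReal
                (∏ i ∈ Finset.univ.filter (fun i : Fin n => (i : ℕ) < d),
                  (ε ^ 2 + ‖z i‖ ^ 2) ^ (q i))) ≤
          ENNReal.ofReal C * (∫⁻ z in {z : Fin n → ℂ | ∀ i, ‖z i‖ < 1}, g z) := by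
  have hq' : ∀ i : Fin n, (i : ℕ) < d → 0 ≤ q i := fun i hi => (hq i hi).le
  have hC :
      1 ≤ ∏ i ∈ Finset.univ.filter (fun i : Fin n => (i : ℕ) < d), (1 + q i) * 2 ^ q i :=
    Finset.one_le_prod fun i hi => one_le_mul_of_one_le_of_one_le
      (by linarith [hq' i (Finset.mem_filter.1 hi).2])
      (Real.one_le_rpow (by norm_num) (hq' i (Finset.mem_filter.1 hi).2))
  refine ⟨_, hC, fun ε ⟨hε, hε1⟩ g _ => ?_⟩
  have hdisk : {z : Fin n → ℂ | ∀ i, ‖z i‖ < 1} = univ.pi fun _ => ball 0 1 := by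
    ext z; simp
  have hdisk_meas : MeasurableSet (univ.pi fun _ : Fin n => ball (0 : ℂ) 1) :=
    .univ_pi fun _ => measurableSet_ball
  have hderiv : ∀ z ∈ univ.pi fun _ => ball (0 : ℂ) 1,
      HasFDerivWithinAt (piFeq (fun i : Fin n => (i : ℕ) < d) q ε)
        (fderiv ℝ (piFeq (fun i : Fin n => (i : ℕ) < d) q ε) z)
        (univ.pi fun _ => ball 0 1) z :=
    fun z _ => (differentiable_piFeq _ q hε z).hasFDerivAt.hasFDerivWithinAt
  rw [hdisk]
  exact ⟨ofReal_inv_mul_lintegral_le_lintegral_comp_mul hdisk_meas hderiv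
      (bijOn_piFeq _ q hε hq') (by linarith) (fun z _ => abs_det_fderiv_piFeq_le hε hq' z) g,
    lintegral_comp_mul_le_ofReal_mul_lintegral hdisk_meas hderiv
      (bijOn_piFeq _ q hε hq') (by linarith)
      (fun z _ => prod_le_abs_det_fderiv_piFeq hε hε1 hq' z) g⟩

/-- The change-of-variables estimate (2.13): on the unit polydisk `Ω ⊂ ℂⁿ`, with
`Φ_ε(z) = (F_{ε,q₁}(z₁), …, F_{ε,q_d}(z_d), z_{d+1}, …, z_n)`, there is `C ≥ 1` depending
only on the exponents such that for all `ε ∈ (0,1]` and Borel `g : Ω → [0,∞]`,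
`C⁻¹ ∫_Ω g ≤ ∫_Ω g(Φ_ε z) ∏_{α≤d} (ε² + |z_α|²)^{q_α} dλ(z) ≤ C ∫_Ω g`. -/
theorem stmt_3 (n d : ℕ) (hd1 : 1 ≤ d) (hdn : d ≤ n) (q : Fin n → ℝ)
    (hq : ∀ i : Fin n, (i : ℕ) < d → 0 < q i) :
    ∃ C : ℝ, 1 ≤ C ∧ ∀ ε ∈ Set.Ioc (0 : ℝ) 1,
      ∀ g : (Fin n → ℂ) → ℝ≥0∞, Measurable g →
        ENNReal.ofReal C⁻¹ * (∫⁻ z in {z : Fin n → ℂ | ∀ i, ‖z i‖ < 1}, g z) ≤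
          (∫⁻ z in {z : Fin n → ℂ | ∀ i, ‖z i‖ < 1},
            g (fun i => if (i : ℕ) < d then Feq ε (q i) (z i) else z i) *
              ENNReal.ofReal
                (∏ i ∈ Finset.univ.filter (fun i : Fin n => (i : ℕ) < d),
                  (ε ^ 2 + ‖z i‖ ^ 2) ^ (q i))) ∧
        (∫⁻ z in {z : Fin n → ℂ | ∀ i, ‖z i‖ < 1},
            g (fun i => if (i : ℕ) < d then Feq ε (q i) (z i) else z i) *
              ENNReal.ofReal
                (∏ i ∈ Finset.univ.filter (fun i : Fin n => (i : ℕ) < d),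
                  (ε ^ 2 + ‖z i‖ ^ 2) ^ (q i))) ≤
          ENNReal.ofReal C * (∫⁻ z in {z : Fin n → ℂ | ∀ i, ‖z i‖ < 1}, g z) :=
  stmt_3_general n d q hq
end

section
/- For every p ∈ [1,2] there exists a constant C > 0, depending only on p, n, d and q₁, …, q_d, such that for every ε ∈ (0,1] and every smooth compactly supported function f : Ω → ℝ, setting f̃(w) := f(G_{ε,q₁}(w₁), …, G_{ε,q_d}(w_d), w_{d+1}, …, w_n), one has ∫_Ω ‖∇f̃(w)‖^p dλ(w) ≤ C ∫_Ω ‖∇f(z)‖^p · ∏_{α=1}^{d} (ε² + |z_α|²)^{q_α(1 − p/2)} dλ(z). -/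
open Metric Set MeasureTheory
open scoped ENNReal

noncomputable def cst (ε q : ℝ) (t : ℂ) : ℝ :=
  ((ε ^ 2 + ‖t‖ ^ 2) / (1 + ε ^ 2)) ^ (q / 2)

noncomputable def kst (ε q : ℝ) (t : ℂ) : ℝ :=
  q * cst ε q t / (ε ^ 2 + ‖t‖ ^ 2)

noncomputable def Amap (ε q : ℝ) (t : ℂ) : ℂ →L[ℝ] ℂ :=
  cst ε q t • ContinuousLinearMap.id ℝ ℂ + kst ε q t • (innerSL ℝ t).smulRight t

lemma Feq_eq (ε q : ℝ) (t : ℂ) : Feq ε q t = cst ε q t • t := rfl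

lemma Amap_apply (ε q : ℝ) (t h : ℂ) :
    Amap ε q t h = cst ε q t • h + (kst ε q t * (inner ℝ t h : ℝ)) • t := by
  simp [Amap, mul_smul]

lemma hasStrict (ε q : ℝ) (hε : 0 < ε) (t : ℂ) :
    HasStrictFDerivAt (Feq ε q) (Amap ε q t) t := by
  have hb : 0 < (ε ^ 2 + ‖t‖ ^ 2) / (1 + ε ^ 2) := by positivity
  have hn : HasStrictFDerivAt (fun x : ℂ => ‖x‖ ^ 2) (2 • (innerSL ℝ t)) t :=
    hasStrictFDerivAt_norm_sq t
  have h2 : HasStrictFDerivAt (fun x : ℂ => (ε ^ 2 + ‖x‖ ^ 2) / (1 + ε ^ 2))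
      ((1 / (1 + ε ^ 2)) • (2 • (innerSL ℝ t))) t := by
    have h0 := ((hn.const_add (ε ^ 2)).const_smul ((1 + ε ^ 2)⁻¹ : ℝ))
    have hfun : (fun x : ℂ => (ε ^ 2 + ‖x‖ ^ 2) / (1 + ε ^ 2))
        = fun x : ℂ => (1 + ε ^ 2)⁻¹ • (ε ^ 2 + ‖x‖ ^ 2) := by
      funext x; simp [div_eq_mul_inv, mul_comm]
    rw [hfun, one_div]
    exact h0
  have hc := h2.rpow_const (p := q / 2) (Or.inl hb.ne')
  have := hc.smul (hasStrictFDerivAt_id t)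
  have heq : ((fun y : ℂ => ((ε ^ 2 + ‖y‖ ^ 2) / (1 + ε ^ 2)) ^ (q / 2)) • id) = Feq ε q := rfl
  rw [heq] at this
  refine this.congr_fderiv (Eq.symm ?_)
  ext h
  rw [Amap_apply]
  simp only [ContinuousLinearMap.add_apply, ContinuousLinearMap.smul_apply,
    ContinuousLinearMap.id_apply, ContinuousLinearMap.smulRight_apply,
    ContinuousLinearMap.coe_smul', Pi.smul_apply, id_eq, cst, kst,
    innerSL_apply_apply, smul_eq_mul, nsmul_eq_mul]
  have hbne : (ε ^ 2 + ‖t‖ ^ 2) ≠ 0 := by positivity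
  have : ((ε ^ 2 + ‖t‖ ^ 2) / (1 + ε ^ 2)) ^ (q / 2 - 1)
      = ((ε ^ 2 + ‖t‖ ^ 2) / (1 + ε ^ 2)) ^ (q / 2) * ((1 + ε ^ 2) / (ε ^ 2 + ‖t‖ ^ 2)) := by
    rw [Real.rpow_sub hb, Real.rpow_one]
    field_simp
  rw [this]
  have h1e : (1 + ε ^ 2) ≠ 0 := by positivity
  congr 2
  field_simp
  ring


lemma cst_pos {ε : ℝ} (hε : 0 < ε) (q : ℝ) (t : ℂ) : 0 < cst ε q t := by
  have : 0 < (ε ^ 2 + ‖t‖ ^ 2) / (1 + ε ^ 2) := by positivity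
  exact Real.rpow_pos_of_pos this _

lemma kst_nonneg {ε q : ℝ} (hε : 0 < ε) (hq : 0 < q) (t : ℂ) : 0 ≤ kst ε q t := by
  have h1 := cst_pos hε q t
  have : (0:ℝ) < ε ^ 2 + ‖t‖ ^ 2 := by positivity
  exact div_nonneg (by positivity) this.le

lemma cst_le_one {ε q : ℝ} (hε : 0 < ε) (hq : 0 < q) {t : ℂ} (ht : ‖t‖ ≤ 1) :
    cst ε q t ≤ 1 := by
  apply Real.rpow_le_one (by positivity)
  · rw [div_le_one (by positivity)]
    nlinarith [norm_nonneg t, sq_nonneg t.re]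
  · positivity

lemma norm_Amap_ge {ε q : ℝ} (hε : 0 < ε) (hq : 0 < q) (t h : ℂ) :
    cst ε q t * ‖h‖ ≤ ‖Amap ε q t h‖ := by
  have hc := cst_pos hε q t
  have hk := kst_nonneg hε hq t
  set c := cst ε q t
  set k := kst ε q t
  set r : ℝ := inner ℝ t h
  rw [Amap_apply]
  have hsq : (c * ‖h‖) ^ 2 ≤ ‖c • h + (k * r) • t‖ ^ 2 := by
    rw [norm_add_sq_real]
    have h1 : (inner ℝ (c • h) ((k * r) • t) : ℝ) = c * (k * r) * (inner ℝ h t : ℝ) := by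
      rw [real_inner_smul_left, real_inner_smul_right]; ring
    have h2 : (inner ℝ h t : ℝ) = r := (real_inner_comm h t).symm
    rw [h1, h2]
    have h3 : ‖c • h‖ ^ 2 = c^2 * ‖h‖^2 := by
      rw [norm_smul]; simp [mul_pow, abs_of_pos hc]
    have h4 : ‖(k * r) • t‖ ^ 2 = (k*r)^2 * ‖t‖^2 := by
      rw [norm_smul, mul_pow, Real.norm_eq_abs, sq_abs]
    rw [h3, h4]
    nlinarith [mul_nonneg (mul_nonneg hc.le hk) (sq_nonneg r), mul_nonneg (sq_nonneg (k*r)) (sq_nonneg ‖t‖)]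
  have := Real.sqrt_le_sqrt hsq
  rwa [Real.sqrt_sq (by positivity), Real.sqrt_sq (norm_nonneg _)] at this

lemma inner_one (t : ℂ) : (inner ℝ t 1 : ℝ) = t.re := by
  simp [RCLike.inner_apply, Complex.mul_re]

lemma inner_I (t : ℂ) : (inner ℝ t Complex.I : ℝ) = t.im := by
  simp [RCLike.inner_apply, Complex.mul_re]

lemma det_Amap {ε q : ℝ} (hε : 0 < ε) (hq : 0 < q) (t : ℂ) :
    (Amap ε q t).det = cst ε q t ^ 2 + cst ε q t * kst ε q t * ‖t‖ ^ 2 := by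
  have hrepr : ∀ z : ℂ, ⇑(Complex.basisOneI.repr z) = ![z.re, z.im] :=
    Complex.coe_basisOneI_repr
  rw [ContinuousLinearMap.det, ← LinearMap.det_toMatrix Complex.basisOneI,
    Matrix.det_fin_two]
  have e0 : Complex.basisOneI 0 = 1 := by simp [Complex.coe_basisOneI]
  have e1 : Complex.basisOneI 1 = Complex.I := by simp [Complex.coe_basisOneI]
  have hA1 : Amap ε q t 1 = cst ε q t • (1:ℂ) + (kst ε q t * t.re) • t := by
    rw [Amap_apply, inner_one]
  have hAI : Amap ε q t Complex.I
      = cst ε q t • Complex.I + (kst ε q t * t.im) • t := by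
    rw [Amap_apply, inner_I]
  simp only [LinearMap.toMatrix_apply, ContinuousLinearMap.coe_coe, e0, e1, hA1, hAI, hrepr]
  simp only [Complex.add_re, Complex.add_im, Complex.real_smul, Complex.mul_re, Complex.mul_im,
    Complex.ofReal_re, Complex.ofReal_im, Complex.one_re, Complex.one_im, Complex.I_re,
    Complex.I_im, Matrix.cons_val_zero, Matrix.cons_val_one, Matrix.head_cons]
  have hn : ‖t‖ ^ 2 = t.re ^ 2 + t.im ^ 2 := by
    rw [Complex.sq_norm, Complex.normSq_apply]; ring
  rw [hn]; ring

lemma det_Amap_pos {ε q : ℝ} (hε : 0 < ε) (hq : 0 < q) (t : ℂ) :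
    0 < (Amap ε q t).det := by
  rw [det_Amap hε hq]
  have hc := cst_pos hε q t
  have hk := kst_nonneg hε hq t
  nlinarith [mul_nonneg (mul_nonneg hc.le hk) (sq_nonneg ‖t‖)]

lemma det_Amap_le {ε q : ℝ} (hε : 0 < ε) (hq : 0 < q) (t : ℂ) :
    (Amap ε q t).det ≤ (1 + q) * cst ε q t ^ 2 := by
  rw [det_Amap hε hq]
  have hc := cst_pos hε q t
  have hd : (0:ℝ) < ε ^ 2 + ‖t‖ ^ 2 := by positivity
  have : kst ε q t * ‖t‖ ^ 2 ≤ q * cst ε q t := by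
    rw [kst, div_mul_eq_mul_div, div_le_iff₀ hd]
    nlinarith [sq_nonneg ε, mul_pos (mul_pos hq hc) hd]
  nlinarith

noncomputable def Aeqv (ε q : ℝ) (hε : 0 < ε) (hq : 0 < q) (t : ℂ) : ℂ ≃L[ℝ] ℂ :=
  LinearEquiv.toContinuousLinearEquiv
    (LinearMap.equivOfDetNeZero (Amap ε q t).toLinearMap (det_Amap_pos hε hq t).ne')

lemma Aeqv_coe {ε q : ℝ} (hε : 0 < ε) (hq : 0 < q) (t : ℂ) :
    ((Aeqv ε q hε hq t) : ℂ →L[ℝ] ℂ) = Amap ε q t := by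
  ext x
  simp [Aeqv, LinearMap.equivOfDetNeZero]

lemma norm_Aeqv_symm_le {ε q : ℝ} (hε : 0 < ε) (hq : 0 < q) (t : ℂ) :
    ‖(((Aeqv ε q hε hq t).symm : ℂ ≃L[ℝ] ℂ) : ℂ →L[ℝ] ℂ)‖ ≤ (cst ε q t)⁻¹ := by
  have hc := cst_pos hε q t
  apply ContinuousLinearMap.opNorm_le_bound _ (by positivity)
  intro w
  set h := ((Aeqv ε q hε hq t).symm : ℂ →L[ℝ] ℂ) w with hh
  have hw : Amap ε q t h = w := by
    rw [← Aeqv_coe hε hq t]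
    show (Aeqv ε q hε hq t) ((Aeqv ε q hε hq t).symm w) = w
    simp
  have := norm_Amap_ge hε hq t h
  rw [hw] at this
  rw [inv_mul_eq_div, le_div_iff₀ hc]
  linarith

lemma Feq_mem_ball {ε q : ℝ} (hε : 0 < ε) (hq : 0 < q) {t : ℂ}
    (ht : t ∈ ball (0:ℂ) 1) : Feq ε q t ∈ ball (0:ℂ) 1 := by
  rw [mem_ball_zero_iff] at ht ⊢
  rw [Feq_eq, norm_smul, Real.norm_eq_abs, abs_of_pos (cst_pos hε q t)]
  calc cst ε q t * ‖t‖ ≤ 1 * ‖t‖ := by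
        apply mul_le_mul_of_nonneg_right (cst_le_one hε hq ht.le) (norm_nonneg t)
    _ < 1 := by rwa [one_mul]

lemma hasFDerivAt_G {ε q : ℝ} (hε : 0 < ε) (hq : 0 < q) {Gm : ℂ → ℂ}
    (hinv : Set.LeftInvOn Gm (Feq ε q) (ball (0:ℂ) 1)) {t : ℂ} (ht : t ∈ ball (0:ℂ) 1) :
    HasFDerivAt Gm (((Aeqv ε q hε hq t).symm : ℂ ≃L[ℝ] ℂ) : ℂ →L[ℝ] ℂ) (Feq ε q t) := by
  have hstrict : HasStrictFDerivAt (Feq ε q)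
      ((Aeqv ε q hε hq t : ℂ ≃L[ℝ] ℂ) : ℂ →L[ℝ] ℂ) t := by
    rw [Aeqv_coe hε hq t]; exact hasStrict ε q hε t
  have hg : ∀ᶠ x in nhds t, Gm (Feq ε q x) = x :=
    (isOpen_ball.eventually_mem ht).mono fun x hx => hinv hx
  exact (hstrict.to_local_left_inverse hg).hasFDerivAt

lemma key1d {ε q p : ℝ} (hε : 0 < ε) (hq : 0 < q) (hp1 : 1 ≤ p) (hp2 : p ≤ 2) (t : ℂ) :
    (Amap ε q t).det * ((cst ε q t)⁻¹) ^ p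
      ≤ (1 + q) * (ε ^ 2 + ‖t‖ ^ 2) ^ (q * (1 - p / 2)) := by
  have hc := cst_pos hε q t
  have hb : (0:ℝ) < (ε ^ 2 + ‖t‖ ^ 2) / (1 + ε ^ 2) := by positivity
  have h1 : ((cst ε q t)⁻¹) ^ p = (cst ε q t ^ p)⁻¹ := Real.inv_rpow hc.le p
  have h2 : (Amap ε q t).det * ((cst ε q t)⁻¹) ^ p
      ≤ (1 + q) * (cst ε q t ^ 2 * (cst ε q t ^ p)⁻¹) := by
    rw [h1]
    have := det_Amap_le hε hq t
    have hpos : (0:ℝ) < (cst ε q t ^ p)⁻¹ := by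
      positivity
    calc (Amap ε q t).det * (cst ε q t ^ p)⁻¹
        ≤ ((1 + q) * cst ε q t ^ 2) * (cst ε q t ^ p)⁻¹ :=
          mul_le_mul_of_nonneg_right this hpos.le
      _ = (1 + q) * (cst ε q t ^ 2 * (cst ε q t ^ p)⁻¹) := by ring
  refine h2.trans (mul_le_mul_of_nonneg_left ?_ (by linarith))
  have h3 : cst ε q t ^ 2 * (cst ε q t ^ p)⁻¹ = cst ε q t ^ ((2:ℝ) - p) := by
    rw [Real.rpow_sub hc, Real.rpow_two, div_eq_mul_inv]
  rw [h3]
  have h4 : cst ε q t ^ ((2:ℝ) - p)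
      = ((ε ^ 2 + ‖t‖ ^ 2) / (1 + ε ^ 2)) ^ (q / 2 * (2 - p)) := by
    rw [cst, ← Real.rpow_mul hb.le]
  rw [h4]
  have h5 : q / 2 * (2 - p) = q * (1 - p / 2) := by ring
  rw [h5]
  have habs : ‖t‖ ^ 2 = ‖t‖ ^ 2 := rfl
  rw [habs]
  apply Real.rpow_le_rpow hb.le _ (by nlinarith)
  calc (ε ^ 2 + ‖t‖ ^ 2) / (1 + ε ^ 2) ≤ (ε ^ 2 + ‖t‖ ^ 2) / 1 := by
        apply div_le_div_of_nonneg_left (by positivity) one_pos (by nlinarith)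
    _ = ε ^ 2 + ‖t‖ ^ 2 := div_one _


lemma det_pi_proj (n : ℕ) (B : Fin n → ℂ →L[ℝ] ℂ) :
    (ContinuousLinearMap.pi fun i =>
      (B i).comp (ContinuousLinearMap.proj i) : (Fin n → ℂ) →L[ℝ] (Fin n → ℂ)).det
    = ∏ i, (B i).det := by
  classical
  set b : Module.Basis ((_ : Fin n) × Fin 2) ℝ (Fin n → ℂ) :=
    Pi.basis (fun _ : Fin n => Complex.basisOneI) with hb
  have hdet := LinearMap.det_toMatrix b
    ((ContinuousLinearMap.pi fun i => (B i).comp (ContinuousLinearMap.proj i) :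
      (Fin n → ℂ) →L[ℝ] (Fin n → ℂ)) : (Fin n → ℂ) →ₗ[ℝ] (Fin n → ℂ))
  rw [ContinuousLinearMap.det, ← hdet]
  have hM : LinearMap.toMatrix b b
      ((ContinuousLinearMap.pi fun i => (B i).comp (ContinuousLinearMap.proj i) :
        (Fin n → ℂ) →L[ℝ] (Fin n → ℂ)) : (Fin n → ℂ) →ₗ[ℝ] (Fin n → ℂ))
      = (Matrix.blockDiagonal fun i : Fin n =>
          LinearMap.toMatrix Complex.basisOneI Complex.basisOneI (B i : ℂ →ₗ[ℝ] ℂ)).submatrix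
        (fun ji : (_ : Fin n) × Fin 2 => (ji.2, ji.1)) (fun ji => (ji.2, ji.1)) := by
    ext ⟨i, a⟩ ⟨j, c⟩
    rw [LinearMap.toMatrix_apply]
    simp only [hb, Pi.basis_apply, Pi.basis_repr]
    have : (((ContinuousLinearMap.pi fun i => (B i).comp (ContinuousLinearMap.proj i) :
        (Fin n → ℂ) →L[ℝ] (Fin n → ℂ))) : (Fin n → ℂ) →ₗ[ℝ] (Fin n → ℂ))
          (Pi.single j (Complex.basisOneI c)) i
        = B i ((Pi.single j (Complex.basisOneI c) : Fin n → ℂ) i) := rfl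
    rw [this]
    by_cases hij : i = j
    · subst hij
      simp only [Pi.single_eq_same, Matrix.submatrix_apply, Matrix.blockDiagonal_apply,
        if_pos rfl, LinearMap.toMatrix_apply, ContinuousLinearMap.coe_coe]
      rfl
    · simp [Pi.single_eq_of_ne (Ne.symm hij), Matrix.blockDiagonal_apply, hij, Ne.symm hij]
  rw [hM]
  have := Matrix.det_submatrix_equiv_self
    ((Equiv.sigmaEquivProd (Fin n) (Fin 2)).trans (Equiv.prodComm (Fin n) (Fin 2)))
    (Matrix.blockDiagonal fun i : Fin n =>
      LinearMap.toMatrix Complex.basisOneI Complex.basisOneI (B i : ℂ →ₗ[ℝ] ℂ))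
  rw [show ((fun ji : (_ : Fin n) × Fin 2 => ((ji.2, ji.1) : Fin 2 × Fin n)))
      = ⇑((Equiv.sigmaEquivProd (Fin n) (Fin 2)).trans (Equiv.prodComm (Fin n) (Fin 2))) from rfl,
    this, Matrix.det_blockDiagonal]
  exact Finset.prod_congr rfl fun k _ => LinearMap.det_toMatrix _ _

lemma one_le_prod_R {ι : Type*} {s : Finset ι} {f : ι → ℝ} (h : ∀ i ∈ s, 1 ≤ f i) :
    1 ≤ ∏ i ∈ s, f i := by
  calc (1:ℝ) = ∏ _i ∈ s, 1 := by simp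
    _ ≤ ∏ i ∈ s, f i := Finset.prod_le_prod (by intros; norm_num) h

lemma single_le_prod_R {ι : Type*} [DecidableEq ι] {s : Finset ι} {f : ι → ℝ} (h : ∀ i ∈ s, 1 ≤ f i)
    {i : ι} (hi : i ∈ s) : f i ≤ ∏ j ∈ s, f j := by
  rw [← Finset.mul_prod_erase s f hi]
  have h1 : 1 ≤ ∏ j ∈ s.erase i, f j :=
    one_le_prod_R (fun j hj => h j (Finset.mem_of_mem_erase hj))
  nlinarith [h i hi]

/-- Estimate (2.16): for `p ∈ [1,2]` there is `C > 0` depending only on `p, n, d, q` such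
that for every `ε ∈ (0,1]` and every smooth compactly supported `f : Ω → ℝ`, with
`f̃(w) = f(G_{ε,q₁}(w₁), …, G_{ε,q_d}(w_d), w_{d+1}, …, w_n)` (where `G_{ε,q}` inverts
`F_{ε,q}` on the unit disk), one has
`∫_Ω ‖∇f̃‖^p dλ ≤ C ∫_Ω ‖∇f(z)‖^p ∏_{α≤d} (ε² + |z_α|²)^{q_α(1-p/2)} dλ(z)`. -/
theorem stmt_4 (n d : ℕ) (hd1 : 1 ≤ d) (hdn : d ≤ n) (q : Fin n → ℝ)
    (hq : ∀ i : Fin n, (i : ℕ) < d → 0 < q i) (p : ℝ) (hp : p ∈ Set.Icc (1 : ℝ) 2) :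
    ∃ C : ℝ, 0 < C ∧ ∀ ε ∈ Set.Ioc (0 : ℝ) 1, ∀ G : Fin n → ℂ → ℂ,
      (∀ i : Fin n, (i : ℕ) < d →
        Set.InvOn (G i) (Feq ε (q i)) (ball (0 : ℂ) 1) (ball (0 : ℂ) 1) ∧
        Set.MapsTo (G i) (ball (0 : ℂ) 1) (ball (0 : ℂ) 1)) →
      ∀ f : (Fin n → ℂ) → ℝ, ContDiff ℝ (⊤ : ℕ∞) f →
        tsupport f ⊆ {z : Fin n → ℂ | ∀ i, ‖z i‖ < 1} →
        (∫⁻ w in {z : Fin n → ℂ | ∀ i, ‖z i‖ < 1},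
            ENNReal.ofReal
              (‖fderiv ℝ
                (fun w' : Fin n → ℂ =>
                  f (fun i => if (i : ℕ) < d then G i (w' i) else w' i)) w‖ ^ p)) ≤
          ENNReal.ofReal C *
            ∫⁻ z in {z : Fin n → ℂ | ∀ i, ‖z i‖ < 1},
              ENNReal.ofReal (‖fderiv ℝ f z‖ ^ p *
                ∏ i ∈ Finset.univ.filter (fun i : Fin n => (i : ℕ) < d),
                  (ε ^ 2 + ‖z i‖ ^ 2) ^ (q i * (1 - p / 2))) := by
  classical
  obtain ⟨hp1, hp2⟩ := hp
  set Fs := Finset.univ.filter (fun i : Fin n => (i : ℕ) < d) with hFs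
  refine ⟨∏ i ∈ Fs, (1 + q i), ?_, ?_⟩
  · apply Finset.prod_pos
    intro i hi
    have := hq i (by simpa [hFs] using hi)
    linarith
  intro ε hε G hG f hf hsupp
  have hε0 : 0 < ε := hε.1
  set S : Set (Fin n → ℂ) := {z : Fin n → ℂ | ∀ i, ‖z i‖ < 1} with hS
  have hmemS : ∀ z : Fin n → ℂ, z ∈ S ↔ ∀ i, z i ∈ ball (0:ℂ) 1 := by
    intro z
    simp only [hS, mem_setOf_eq, mem_ball_zero_iff]
  have hSmeas : MeasurableSet S := by
    have : S = Set.pi univ (fun _ : Fin n => ball (0:ℂ) 1) := by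
      ext z; simp [hmemS z, Set.mem_pi]
    rw [this]
    exact MeasurableSet.univ_pi fun i => measurableSet_ball
  -- the forward map and its derivative
  set Φ : (Fin n → ℂ) → (Fin n → ℂ) :=
    fun z i => if (i : ℕ) < d then Feq ε (q i) (z i) else z i with hΦ
  set B : (Fin n → ℂ) → Fin n → (ℂ →L[ℝ] ℂ) :=
    fun z i => if h : (i : ℕ) < d then Amap ε (q i) (z i)
      else ContinuousLinearMap.id ℝ ℂ with hB
  have hΦderiv : ∀ z, HasFDerivAt Φ
      (ContinuousLinearMap.pi fun i => (B z i).comp (ContinuousLinearMap.proj i)) z := by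
    intro z
    apply hasFDerivAt_pi.2
    intro i
    by_cases hi : (i : ℕ) < d
    · have heq : (fun z : Fin n → ℂ => if (i : ℕ) < d then Feq ε (q i) (z i) else z i)
          = fun z : Fin n → ℂ => Feq ε (q i) (z i) := by
        funext z; rw [if_pos hi]
      have hBi : B z i = Amap ε (q i) (z i) := by rw [hB]; simp [hi]
      rw [heq, hBi]
      exact (hasStrict ε (q i) hε0 (z i)).hasFDerivAt.comp z (hasFDerivAt_apply (𝕜 := ℝ) i z)
    · have heq : (fun z : Fin n → ℂ => if (i : ℕ) < d then Feq ε (q i) (z i) else z i)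
          = fun z : Fin n → ℂ => z i := by
        funext z; rw [if_neg hi]
      have hBi : B z i = ContinuousLinearMap.id ℝ ℂ := by rw [hB]; simp [hi]
      rw [heq, hBi, ContinuousLinearMap.id_comp]
      exact hasFDerivAt_apply i z
  -- injectivity on S
  have hΦinj : Set.InjOn Φ S := by
    intro z1 hz1 z2 hz2 heq
    funext i
    by_cases hi : (i : ℕ) < d
    · have h1 : Φ z1 i = Φ z2 i := by rw [heq]
      simp only [hΦ, if_pos hi] at h1
      have := (hG i hi).1.1
      have e1 := this ((hmemS z1).1 hz1 i)
      have e2 := this ((hmemS z2).1 hz2 i)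
      rw [← e1, ← e2, h1]
    · have h1 : Φ z1 i = Φ z2 i := by rw [heq]
      simpa only [hΦ, if_neg hi] using h1
  -- image of S
  have hΦim : Φ '' S = S := by
    apply Subset.antisymm
    · rintro _ ⟨z, hz, rfl⟩
      rw [hmemS]
      intro i
      by_cases hi : (i : ℕ) < d
      · simp only [hΦ, if_pos hi]
        exact Feq_mem_ball hε0 (hq i hi) ((hmemS z).1 hz i)
      · simp only [hΦ, if_neg hi]
        exact (hmemS z).1 hz i
    · intro w hw
      refine ⟨fun i => if (i : ℕ) < d then G i (w i) else w i, ?_, ?_⟩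
      · rw [hmemS]
        intro i
        by_cases hi : (i : ℕ) < d
        · simp only [if_pos hi]
          exact (hG i hi).2 ((hmemS w).1 hw i)
        · simp only [if_neg hi]
          exact (hmemS w).1 hw i
      · funext i
        by_cases hi : (i : ℕ) < d
        · simp only [hΦ, if_pos hi]
          exact (hG i hi).1.2 ((hmemS w).1 hw i)
        · simp only [hΦ, if_neg hi]
  -- the inverse map and its derivative
  set Ψ : (Fin n → ℂ) → (Fin n → ℂ) :=
    fun w i => if (i : ℕ) < d then G i (w i) else w i with hΨ
  set B' : (Fin n → ℂ) → Fin n → (ℂ →L[ℝ] ℂ) :=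
    fun z i => if h : (i : ℕ) < d
      then (((Aeqv ε (q i) hε0 (hq i h) (z i)).symm : ℂ ≃L[ℝ] ℂ) : ℂ →L[ℝ] ℂ)
      else ContinuousLinearMap.id ℝ ℂ with hB'
  have hΨderiv : ∀ z ∈ S, HasFDerivAt Ψ
      (ContinuousLinearMap.pi fun i => (B' z i).comp (ContinuousLinearMap.proj i)) (Φ z) := by
    intro z hz
    apply hasFDerivAt_pi.2
    intro i
    by_cases hi : (i : ℕ) < d
    · have heq : (fun w : Fin n → ℂ => if (i : ℕ) < d then G i (w i) else w i)
          = fun w : Fin n → ℂ => G i (w i) := by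
        funext w; rw [if_pos hi]
      have hBi : B' z i
          = (((Aeqv ε (q i) hε0 (hq i hi) (z i)).symm : ℂ ≃L[ℝ] ℂ) : ℂ →L[ℝ] ℂ) := by
        rw [hB']; simp [hi]
      rw [heq, hBi]
      have hGi := hasFDerivAt_G hε0 (hq i hi) (hG i hi).1.1 ((hmemS z).1 hz i)
      have hpt : Φ z i = Feq ε (q i) (z i) := by simp only [hΦ, if_pos hi]
      rw [← hpt] at hGi
      exact hGi.comp (Φ z) (hasFDerivAt_apply (𝕜 := ℝ) i (Φ z))
    · have heq : (fun w : Fin n → ℂ => if (i : ℕ) < d then G i (w i) else w i)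
          = fun w : Fin n → ℂ => w i := by
        funext w; rw [if_neg hi]
      have hBi : B' z i = ContinuousLinearMap.id ℝ ℂ := by rw [hB']; simp [hi]
      rw [heq, hBi, ContinuousLinearMap.id_comp]
      exact hasFDerivAt_apply i (Φ z)
  have hΨΦ : ∀ z ∈ S, Ψ (Φ z) = z := by
    intro z hz
    funext i
    by_cases hi : (i : ℕ) < d
    · simp only [hΨ, hΦ, if_pos hi]
      exact (hG i hi).1.1 ((hmemS z).1 hz i)
    · simp only [hΨ, hΦ, if_neg hi]
  -- derivative of the composed function
  have hcomp : ∀ z ∈ S, fderiv ℝ (fun w => f (Ψ w)) (Φ z)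
      = (fderiv ℝ f z).comp
        (ContinuousLinearMap.pi fun i => (B' z i).comp (ContinuousLinearMap.proj i)) := by
    intro z hz
    have hfd : HasFDerivAt f (fderiv ℝ f z) (Ψ (Φ z)) := by
      rw [hΨΦ z hz]
      exact (hf.differentiable (by simp)).differentiableAt.hasFDerivAt
    exact (hfd.comp (Φ z) (hΨderiv z hz)).fderiv
  -- operator norm bound on the inverse derivative
  have hMz : ∀ z ∈ S,
      ‖ContinuousLinearMap.pi fun i => (B' z i).comp (ContinuousLinearMap.proj i)‖
        ≤ ∏ i ∈ Fs, (cst ε (q i) (z i))⁻¹ := by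
    intro z hz
    have hfac : ∀ j ∈ Fs, (1:ℝ) ≤ (cst ε (q j) (z j))⁻¹ := by
      intro j hj
      have hjd : (j : ℕ) < d := by simpa [hFs] using hj
      have h1 := cst_le_one hε0 (hq j hjd) (le_of_lt ((mem_ball_zero_iff).1 ((hmemS z).1 hz j)))
      have h2 := cst_pos hε0 (q j) (z j)
      calc (1:ℝ) = 1⁻¹ := by norm_num
        _ ≤ (cst ε (q j) (z j))⁻¹ := by
            apply inv_anti₀ h2 h1
    have hMnonneg : (0:ℝ) ≤ ∏ i ∈ Fs, (cst ε (q i) (z i))⁻¹ := by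
      apply Finset.prod_nonneg
      intro j hj
      have := cst_pos hε0 (q j) (z j)
      positivity
    apply ContinuousLinearMap.opNorm_le_bound _ hMnonneg
    intro x
    rw [mul_comm]
    apply pi_norm_le_iff_of_nonneg (by positivity) |>.2
    intro i
    have hxi : ‖x i‖ ≤ ‖x‖ := norm_le_pi_norm x i
    by_cases hi : (i : ℕ) < d
    · have hBi : B' z i
          = (((Aeqv ε (q i) hε0 (hq i hi) (z i)).symm : ℂ ≃L[ℝ] ℂ) : ℂ →L[ℝ] ℂ) := by
        rw [hB']; simp [hi]
      have hb := norm_Aeqv_symm_le hε0 (hq i hi) (z i)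
      have hile : (cst ε (q i) (z i))⁻¹ ≤ ∏ j ∈ Fs, (cst ε (q j) (z j))⁻¹ := by
        exact single_le_prod_R hfac (by simp [hFs, hi])
      calc ‖((ContinuousLinearMap.pi fun j => (B' z j).comp (ContinuousLinearMap.proj j)) x) i‖
          = ‖B' z i (x i)‖ := rfl
        _ ≤ ‖B' z i‖ * ‖x i‖ := ContinuousLinearMap.le_opNorm _ _
        _ ≤ (cst ε (q i) (z i))⁻¹ * ‖x‖ := by
            apply mul_le_mul _ hxi (norm_nonneg _) _
            · rw [hBi]; exact hb
            · have := cst_pos hε0 (q i) (z i); positivity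
        _ ≤ (∏ j ∈ Fs, (cst ε (q j) (z j))⁻¹) * ‖x‖ :=
            mul_le_mul_of_nonneg_right hile (norm_nonneg _)
        _ = ‖x‖ * ∏ j ∈ Fs, (cst ε (q j) (z j))⁻¹ := mul_comm _ _
    · have hBi : B' z i = ContinuousLinearMap.id ℝ ℂ := by rw [hB']; simp [hi]
      have hMone : (1:ℝ) ≤ ∏ j ∈ Fs, (cst ε (q j) (z j))⁻¹ :=
        one_le_prod_R hfac
      calc ‖((ContinuousLinearMap.pi fun j => (B' z j).comp (ContinuousLinearMap.proj j)) x) i‖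
          = ‖B' z i (x i)‖ := rfl
        _ = ‖x i‖ := by rw [hBi]; rfl
        _ ≤ ‖x‖ := hxi
        _ ≤ (∏ j ∈ Fs, (cst ε (q j) (z j))⁻¹) * ‖x‖ := by
            nlinarith [norm_nonneg x]
        _ = ‖x‖ * ∏ j ∈ Fs, (cst ε (q j) (z j))⁻¹ := mul_comm _ _
  -- determinant identity and bound
  have hdetid : ∀ z : Fin n → ℂ,
      (ContinuousLinearMap.pi fun i => (B z i).comp (ContinuousLinearMap.proj i) :
        (Fin n → ℂ) →L[ℝ] (Fin n → ℂ)).det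
      = ∏ i ∈ Fs, (Amap ε (q i) (z i)).det := by
    intro z
    rw [det_pi_proj]
    have hBdet : ∀ i : Fin n, (B z i).det
        = if (i : ℕ) < d then (Amap ε (q i) (z i)).det else 1 := by
      intro i
      by_cases hi : (i : ℕ) < d
      · simp [hB, hi]
      · simp only [hB, dif_neg hi, if_neg hi]
        rw [ContinuousLinearMap.det, ContinuousLinearMap.coe_id, LinearMap.det_id]
    rw [Finset.prod_congr rfl (fun i _ => hBdet i), hFs, Finset.prod_filter]
  -- pointwise estimate
  have hpt : ∀ z ∈ S,
      ENNReal.ofReal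
        |(ContinuousLinearMap.pi fun i => (B z i).comp (ContinuousLinearMap.proj i) :
          (Fin n → ℂ) →L[ℝ] (Fin n → ℂ)).det| *
        ENNReal.ofReal (‖fderiv ℝ (fun w => f (Ψ w)) (Φ z)‖ ^ p)
      ≤ ENNReal.ofReal (∏ i ∈ Fs, (1 + q i)) *
        ENNReal.ofReal (‖fderiv ℝ f z‖ ^ p *
          ∏ i ∈ Fs, (ε ^ 2 + ‖z i‖ ^ 2) ^ (q i * (1 - p / 2))) := by
    intro z hz
    rw [← ENNReal.ofReal_mul (abs_nonneg _), ← ENNReal.ofReal_mul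
      (Finset.prod_nonneg fun j hj => by
        have := hq j (by simpa [hFs] using hj); linarith)]
    apply ENNReal.ofReal_le_ofReal
    set Mz := ∏ i ∈ Fs, (cst ε (q i) (z i))⁻¹ with hMzdef
    have hMznn : 0 ≤ Mz := by
      apply Finset.prod_nonneg
      intro j hj
      have := cst_pos hε0 (q j) (z j)
      positivity
    have hN : ‖fderiv ℝ (fun w => f (Ψ w)) (Φ z)‖ ≤ ‖fderiv ℝ f z‖ * Mz := by
      rw [hcomp z hz]
      calc ‖(fderiv ℝ f z).comp
            (ContinuousLinearMap.pi fun i => (B' z i).comp (ContinuousLinearMap.proj i))‖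
          ≤ ‖fderiv ℝ f z‖ *
            ‖ContinuousLinearMap.pi fun i => (B' z i).comp (ContinuousLinearMap.proj i)‖ :=
            ContinuousLinearMap.opNorm_comp_le _ _
        _ ≤ ‖fderiv ℝ f z‖ * Mz :=
            mul_le_mul_of_nonneg_left (hMz z hz) (norm_nonneg _)
    have hp0 : 0 ≤ p := by linarith
    have hNp : ‖fderiv ℝ (fun w => f (Ψ w)) (Φ z)‖ ^ p ≤ (‖fderiv ℝ f z‖ * Mz) ^ p :=
      Real.rpow_le_rpow (norm_nonneg _) hN hp0
    have hsplit : (‖fderiv ℝ f z‖ * Mz) ^ p = ‖fderiv ℝ f z‖ ^ p * Mz ^ p :=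
      Real.mul_rpow (norm_nonneg _) hMznn
    have hMzp : Mz ^ p = ∏ i ∈ Fs, ((cst ε (q i) (z i))⁻¹) ^ p := by
      rw [hMzdef, ← Real.finset_prod_rpow]
      intro j hj
      have := cst_pos hε0 (q j) (z j)
      positivity
    have hdabs : |(ContinuousLinearMap.pi fun i =>
          (B z i).comp (ContinuousLinearMap.proj i) :
          (Fin n → ℂ) →L[ℝ] (Fin n → ℂ)).det| = ∏ i ∈ Fs, (Amap ε (q i) (z i)).det := by
      rw [hdetid z, abs_of_pos]
      apply Finset.prod_pos
      intro j hj
      exact det_Amap_pos hε0 (hq j (by simpa [hFs] using hj)) (z j)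
    rw [hdabs]
    have hdetnn : ∀ j ∈ Fs, (0:ℝ) ≤ (Amap ε (q j) (z j)).det := fun j hj =>
      (det_Amap_pos hε0 (hq j (by simpa [hFs] using hj)) (z j)).le
    calc (∏ i ∈ Fs, (Amap ε (q i) (z i)).det) *
          ‖fderiv ℝ (fun w => f (Ψ w)) (Φ z)‖ ^ p
        ≤ (∏ i ∈ Fs, (Amap ε (q i) (z i)).det) * (‖fderiv ℝ f z‖ ^ p * Mz ^ p) := by
          apply mul_le_mul_of_nonneg_left _ (Finset.prod_nonneg hdetnn)
          rw [← hsplit]; exact hNp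
      _ = ‖fderiv ℝ f z‖ ^ p *
            ∏ i ∈ Fs, ((Amap ε (q i) (z i)).det * ((cst ε (q i) (z i))⁻¹) ^ p) := by
          rw [hMzp, Finset.prod_mul_distrib]; ring
      _ ≤ ‖fderiv ℝ f z‖ ^ p *
            ∏ i ∈ Fs, ((1 + q i) * (ε ^ 2 + ‖z i‖ ^ 2) ^ (q i * (1 - p / 2))) := by
          apply mul_le_mul_of_nonneg_left _ (by positivity)
          apply Finset.prod_le_prod
          · intro j hj
            apply mul_nonneg (hdetnn j hj)
            have := cst_pos hε0 (q j) (z j)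
            positivity
          · intro j hj
            exact key1d hε0 (hq j (by simpa [hFs] using hj)) hp1 hp2 (z j)
      _ = (∏ i ∈ Fs, (1 + q i)) *
            (‖fderiv ℝ f z‖ ^ p *
              ∏ i ∈ Fs, (ε ^ 2 + ‖z i‖ ^ 2) ^ (q i * (1 - p / 2))) := by
          rw [Finset.prod_mul_distrib]; ring
  -- change of variables
  have hfun : (fun w' : Fin n → ℂ =>
      f (fun i => if (i : ℕ) < d then G i (w' i) else w' i)) = fun w => f (Ψ w) := rfl
  rw [hfun]
  calc ∫⁻ w in S, ENNReal.ofReal (‖fderiv ℝ (fun w => f (Ψ w)) w‖ ^ p)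
      = ∫⁻ w in Φ '' S, ENNReal.ofReal (‖fderiv ℝ (fun w => f (Ψ w)) w‖ ^ p) := by rw [hΦim]
    _ = ∫⁻ z in S, ENNReal.ofReal
          |(ContinuousLinearMap.pi fun i => (B z i).comp (ContinuousLinearMap.proj i) :
            (Fin n → ℂ) →L[ℝ] (Fin n → ℂ)).det| *
          ENNReal.ofReal (‖fderiv ℝ (fun w => f (Ψ w)) (Φ z)‖ ^ p) :=
        lintegral_image_eq_lintegral_abs_det_fderiv_mul volume hSmeas
          (fun x _ => (hΦderiv x).hasFDerivWithinAt) hΦinj _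
    _ ≤ ∫⁻ z in S, ENNReal.ofReal (∏ i ∈ Fs, (1 + q i)) *
          ENNReal.ofReal (‖fderiv ℝ f z‖ ^ p *
            ∏ i ∈ Fs, (ε ^ 2 + ‖z i‖ ^ 2) ^ (q i * (1 - p / 2))) :=
        setLIntegral_mono' hSmeas hpt
    _ = ENNReal.ofReal (∏ i ∈ Fs, (1 + q i)) *
          ∫⁻ z in S, ENNReal.ofReal (‖fderiv ℝ f z‖ ^ p *
            ∏ i ∈ Fs, (ε ^ 2 + ‖z i‖ ^ 2) ^ (q i * (1 - p / 2))) :=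
        lintegral_const_mul' _ _ ENNReal.ofReal_ne_top
end
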